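/- Let u, v ∈ ℝ, Δ > 0 and θ₀ ∈ ℝ with θ₀²Δ² < 1. Let W_i, W_j be independent standard normal random variables and set Λ_i = u/2 + Δ^{1/2}W_i and Λ_j = v/2 − Δ^{1/2}W_j. Then E[exp(θ₀ Λ_i Λ_j)] = (1 − θ₀²Δ²)^{−1/2} · exp( θ₁·u·v + η₁·u² + η₁·v² ), where θ₁ = θ₀ / (4(1−θ₀²Δ²)) and η₁ = θ₀²Δ / (8(1−θ₀²Δ²)). -/

import Mathlib

/-!
Integrating out `W_j` first is a Gaussian moment generating function; it leaves the exponential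
of a quadratic `a x² + b x` in `W_i` with `a = θ₀²Δ²/2 < 1/2`, and completing the square gives
`E[exp(a W² + b W)] = (1 - 2a)^{-1/2} exp(b² / (2(1 - 2a)))` for a standard normal `W`.
-/

open MeasureTheory ProbabilityTheory Real
open scoped NNReal

lemma exp_neg_mul_sq_add_mul_eq {p : ℝ} (hp : p ≠ 0) (q x : ℝ) :
    exp (-p * x ^ 2 + q * x) = exp (q ^ 2 / (4 * p)) * exp (-p * (x - q / (2 * p)) ^ 2) := by
  rw [← exp_add]
  congr 1
  field_simp
  ring

lemma integrable_exp_neg_mul_sq_add_mul {p : ℝ} (hp : 0 < p) (q : ℝ) :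
    Integrable fun x : ℝ ↦ exp (-p * x ^ 2 + q * x) := by
  simp_rw [exp_neg_mul_sq_add_mul_eq hp.ne']
  exact ((integrable_exp_neg_mul_sq hp).comp_sub_right _).const_mul _

lemma integral_exp_neg_mul_sq_add_mul {p : ℝ} (hp : 0 < p) (q : ℝ) :
    ∫ x : ℝ, exp (-p * x ^ 2 + q * x) = √(π / p) * exp (q ^ 2 / (4 * p)) := by
  simp_rw [exp_neg_mul_sq_add_mul_eq hp.ne']
  rw [integral_const_mul, integral_sub_right_eq_self (fun x ↦ exp (-p * x ^ 2)),
    integral_gaussian, mul_comm]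

lemma integrable_gaussianReal_iff {μ : ℝ} {v : ℝ≥0} (hv : v ≠ 0) {f : ℝ → ℝ} :
    Integrable f (gaussianReal μ v) ↔ Integrable fun x ↦ gaussianPDFReal μ v x * f x := by
  rw [gaussianReal_of_var_ne_zero _ hv, integrable_withDensity_iff_integrable_smul'
    (measurable_gaussianPDF μ v) (ae_of_all _ fun _ ↦ gaussianPDF_lt_top)]
  simp only [toReal_gaussianPDF, smul_eq_mul]

lemma gaussianPDFReal_zero_one_mul_exp (a b x : ℝ) :
    gaussianPDFReal 0 1 x * exp (a * x ^ 2 + b * x) =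
      (√(2 * π))⁻¹ * exp (-(1 / 2 - a) * x ^ 2 + b * x) := by
  simp only [gaussianPDFReal, NNReal.coe_one, mul_one, sub_zero, mul_assoc, ← exp_add]
  ring_nf

lemma integrable_exp_quadratic_gaussianReal {a : ℝ} (ha : a < 1 / 2) (b : ℝ) :
    Integrable (fun x ↦ exp (a * x ^ 2 + b * x)) (gaussianReal 0 1) := by
  rw [integrable_gaussianReal_iff one_ne_zero]
  simp_rw [gaussianPDFReal_zero_one_mul_exp]
  exact (integrable_exp_neg_mul_sq_add_mul (by linarith) b).const_mul _

lemma integral_exp_quadratic_gaussianReal {a : ℝ} (ha : a < 1 / 2) (b : ℝ) :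
    ∫ x, exp (a * x ^ 2 + b * x) ∂gaussianReal 0 1 =
      (1 - 2 * a) ^ (-(1 : ℝ) / 2) * exp (b ^ 2 / (2 * (1 - 2 * a))) := by
  have h2a : 0 < 1 - 2 * a := by linarith
  rw [integral_gaussianReal_eq_integral_smul one_ne_zero]
  simp_rw [smul_eq_mul, gaussianPDFReal_zero_one_mul_exp]
  rw [integral_const_mul, integral_exp_neg_mul_sq_add_mul (by linarith),
    neg_div, rpow_neg h2a.le, ← sqrt_eq_rpow, ← mul_assoc]
  congr 1
  · rw [show π / (1 / 2 - a) = 2 * π / (1 - 2 * a) by field_simp, sqrt_div (by positivity)]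
    have : √(2 * π) ≠ 0 := by positivity
    field_simp
  · congr 1
    field_simp
    ring

lemma integral_exp_mul_gaussianReal (t : ℝ) :
    ∫ x, exp (t * x) ∂gaussianReal 0 1 = exp (t ^ 2 / 2) := by
  simpa [mgf] using congrFun (mgf_fun_id_gaussianReal (μ := 0) (v := 1)) t

lemma exp_mul_mul_add (θ a q y : ℝ) :
    exp (θ * (a * (q + y))) = exp (θ * a * q) * exp (θ * a * y) := by
  rw [← exp_add]
  ring_nf

lemma integral_exp_mul_mul_add_gaussianReal (θ p q x : ℝ) :
    ∫ y, exp (θ * ((p + x) * (q + y))) ∂gaussianReal 0 1 =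
      exp (θ * p * q + θ ^ 2 * p ^ 2 / 2) *
        exp (θ ^ 2 / 2 * x ^ 2 + (θ * q + θ ^ 2 * p) * x) := by
  simp_rw [exp_mul_mul_add]
  rw [integral_const_mul, integral_exp_mul_gaussianReal, ← exp_add, ← exp_add]
  ring_nf

lemma integral_exp_mul_mul_add_gaussianReal_prod {θ : ℝ} (hθ : θ ^ 2 < 1) (p q : ℝ) :
    ∫ z, exp (θ * ((p + z.1) * (q + z.2))) ∂(gaussianReal 0 1).prod (gaussianReal 0 1) =
      (1 - θ ^ 2) ^ (-(1 : ℝ) / 2) *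
        exp ((θ * p * q + θ ^ 2 * (p ^ 2 + q ^ 2) / 2) / (1 - θ ^ 2)) := by
  have ha : θ ^ 2 / 2 < 1 / 2 := by linarith
  have hint : Integrable (fun z : ℝ × ℝ ↦ exp (θ * ((p + z.1) * (q + z.2))))
      ((gaussianReal 0 1).prod (gaussianReal 0 1)) := by
    refine (integrable_prod_iff (by fun_prop)).2 ⟨ae_of_all _ fun x ↦ ?_, ?_⟩
    · simp_rw [exp_mul_mul_add]
      exact (integrable_exp_mul_gaussianReal _).const_mul _
    · simp_rw [norm_eq_abs, abs_exp, integral_exp_mul_mul_add_gaussianReal]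
      exact (integrable_exp_quadratic_gaussianReal ha _).const_mul _
  rw [integral_prod _ hint]
  simp_rw [integral_exp_mul_mul_add_gaussianReal]
  rw [integral_const_mul, integral_exp_quadratic_gaussianReal ha, mul_left_comm, ← exp_add]
  have h1 : 0 < 1 - θ ^ 2 := by linarith
  congr 2
  · ring
  · field_simp
    ring

lemma integral_comp_prodMk_of_indepFun {Ω α β E : Type*} [MeasurableSpace Ω] [MeasurableSpace α]
    [MeasurableSpace β] [NormedAddCommGroup E] [NormedSpace ℝ E] {P : Measure Ω}
    [IsFiniteMeasure P] {μ : Measure α} {ν : Measure β} [NeZero μ] [NeZero ν]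
    {X : Ω → α} {Y : Ω → β} (hXY : IndepFun X Y P) (hX : P.map X = μ) (hY : P.map Y = ν)
    {f : α × β → E} (hf : AEStronglyMeasurable f (μ.prod ν)) :
    ∫ ω, f (X ω, Y ω) ∂P = ∫ z, f z ∂μ.prod ν := by
  have hXm : AEMeasurable X P := aemeasurable_of_map_neZero (by rwa [hX])
  have hYm : AEMeasurable Y P := aemeasurable_of_map_neZero (by rwa [hY])
  rw [← hX, ← hY, ← hXY.map_prod_eq_prod_map_map hXm hYm] at hf ⊢
  exact (integral_map (hXm.prodMk hYm) hf).symm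

theorem conditional_mgf_fine_increments
    (u v Δ θ₀ : ℝ) (hΔ : 0 < Δ) (hθ : θ₀ ^ 2 * Δ ^ 2 < 1)
    {Ω : Type*} [MeasurableSpace Ω] (P : Measure Ω) [IsProbabilityMeasure P]
    (Wi Wj : Ω → ℝ)
    (hIndep : IndepFun Wi Wj P)
    (hWi : P.map Wi = gaussianReal 0 1)
    (hWj : P.map Wj = gaussianReal 0 1) :
    ∫ ω, Real.exp (θ₀ * ((u / 2 + Real.sqrt Δ * Wi ω) * (v / 2 - Real.sqrt Δ * Wj ω))) ∂P =
      (1 - θ₀ ^ 2 * Δ ^ 2) ^ (-(1 : ℝ) / 2) *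
        Real.exp ((θ₀ / (4 * (1 - θ₀ ^ 2 * Δ ^ 2))) * u * v +
          (θ₀ ^ 2 * Δ / (8 * (1 - θ₀ ^ 2 * Δ ^ 2))) * u ^ 2 +
          (θ₀ ^ 2 * Δ / (8 * (1 - θ₀ ^ 2 * Δ ^ 2))) * v ^ 2) := by
  obtain ⟨s, hs, rfl⟩ : ∃ s, 0 < s ∧ Δ = s ^ 2 := ⟨√Δ, sqrt_pos.2 hΔ, (sq_sqrt hΔ.le).symm⟩
  have hθ' : (-(θ₀ * s ^ 2)) ^ 2 < 1 := by rwa [neg_sq, mul_pow]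
  calc ∫ ω, exp (θ₀ * ((u / 2 + √(s ^ 2) * Wi ω) * (v / 2 - √(s ^ 2) * Wj ω))) ∂P
      = ∫ z, exp (-(θ₀ * s ^ 2) * ((u / (2 * s) + z.1) * (-v / (2 * s) + z.2)))
          ∂(gaussianReal 0 1).prod (gaussianReal 0 1) := by
        rw [← integral_comp_prodMk_of_indepFun hIndep hWi hWj (by fun_prop), sqrt_sq hs.le]
        congr with ω
        congr 1
        field_simp
        ring
    _ = _ := by
        rw [integral_exp_mul_mul_add_gaussianReal_prod hθ', neg_sq, mul_pow]
        have h1 : 0 < 1 - θ₀ ^ 2 * (s ^ 2) ^ 2 := by linarith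
        congr 2
        field_simp
        ring
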